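/- (Coarse homotopy invariance of ι.) Let X and Y be pseudometric spaces with base points ξ : X and η : Y, and let f, g : X → Y be coarse maps (bornologous and proper at the base point) with f ξ = η = g ξ. If f and g are coarsely homotopic (there exists r : ℝ with d (f x) (g x) ≤ r for all x : X), then for every x ∈ INF(X,ξ), *f x and *g x both lie in INF(Y,η) and *f x ≡ι *g x; consequently the induced maps ιf and ιg on macrochain-connected components coincide. -/
import Mathlib


open Filter

/-- The nonstandard extension `*S` of a type `S`, realised as germs along the
hyperfilter on `ℕ` (a nonprincipal ultrafilter). -/
abbrev St (S : Type*) : Type _ := Filter.Germ (↑(Filter.hyperfilter ℕ) : Filter ℕ) S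

/-- `*d`, the componentwise lift of the distance to the nonstandard extension. -/
noncomputable def starDist {X : Type*} [PseudoMetricSpace X] (x y : St X) : St ℝ :=
  Filter.Germ.map₂ dist x y

/-- `x ∼ y` : two points of `*X` are finitely close if `*d x y ≤ *r` for some real `r`. -/
def FinClose {X : Type*} [PseudoMetricSpace X] (x y : St X) : Prop :=
  ∃ r : ℝ, starDist x y ≤ (↑r : St ℝ)

/-- `FIN(X,ξ)` : the points of `*X` finitely close to the base point. -/
def FIN {X : Type*} [PseudoMetricSpace X] (ξ : X) : Set (St X) :=
  {x | FinClose x (↑ξ : St X)}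

/-- `INF(X,ξ)` : the infinite points of `*X` relative to the base point. -/
def INF {X : Type*} [PseudoMetricSpace X] (ξ : X) : Set (St X) :=
  {x | ¬ FinClose x (↑ξ : St X)}

/-- A subset of a pseudometric space is bounded. -/
def BoundedSet {X : Type*} [PseudoMetricSpace X] (B : Set X) : Prop :=
  ∃ r : ℝ, ∀ a ∈ B, ∀ b ∈ B, dist a b ≤ r

/-- A map of pseudometric spaces is bornologous. -/
def Bornologous {X Y : Type*} [PseudoMetricSpace X] [PseudoMetricSpace Y] (f : X → Y) : Prop :=
  ∀ r : ℝ, ∃ s : ℝ, ∀ x x' : X, dist x x' ≤ r → dist (f x) (f x') ≤ s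

/-- `f` is proper at the base point `η`: preimages of bounded sets containing `η`
are bounded. -/
def ProperAt {X Y : Type*} [PseudoMetricSpace X] [PseudoMetricSpace Y]
    (f : X → Y) (η : Y) : Prop :=
  ∀ B : Set Y, η ∈ B → BoundedSet B → BoundedSet (f ⁻¹' B)

/-- `(N, s)` is an internal hyperfinite chain in `B ⊆ *X` from `x` to `y`. -/
def InternalChain {X : Type*} [PseudoMetricSpace X] (B : Set (St X)) (x y : St X)
    (N : ℕ → ℕ) (s : ℕ → ℕ → X) : Prop :=
  (↑(fun n => s n 0) : St X) = x ∧
  (↑(fun n => s n (N n)) : St X) = y ∧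
  (∀ g : ℕ → ℕ, (∀ᶠ n in (↑(Filter.hyperfilter ℕ) : Filter ℕ), g n ≤ N n) →
    (↑(fun n => s n (g n)) : St X) ∈ B) ∧
  (∀ g : ℕ → ℕ, (∀ᶠ n in (↑(Filter.hyperfilter ℕ) : Filter ℕ), g n < N n) →
    FinClose (↑(fun n => s n (g n)) : St X) (↑(fun n => s n (g n + 1)) : St X))

/-- `B ⊆ *X` is macrochain-connected. -/
def MacroChainConnected {X : Type*} [PseudoMetricSpace X] (B : Set (St X)) : Prop :=
  ∀ x ∈ B, ∀ y ∈ B, ∃ N s, InternalChain B x y N s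

/-- `x ≡ι y` : `x` and `y` are joined by an internal hyperfinite chain lying in `INF(X,ξ)`. -/
def IotaEquiv {X : Type*} [PseudoMetricSpace X] (ξ : X) (x y : St X) : Prop :=
  ∃ N s, InternalChain (INF ξ) x y N s

/-- An element of `*ℕ` is infinite. -/
def InfiniteHypernat (i : St ℕ) : Prop := ∀ m : ℕ, ¬ i ≤ (↑m : St ℕ)

/-- A coarse sequence : a bornologous and proper map `ℕ → X`. -/
def CoarseSeq {X : Type*} [PseudoMetricSpace X] (s : ℕ → X) : Prop :=
  (∀ k : ℕ, ∃ r : ℝ, ∀ m n : ℕ, Nat.dist m n ≤ k → dist (s m) (s n) ≤ r) ∧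
  (∀ B : Set X, BoundedSet B → (s ⁻¹' B).Finite)

/-- `s ⊑ t` for coarse sequences : `s` is a subsequence of `t`. -/
def SubCoarse {X : Type*} [PseudoMetricSpace X] (s t : ℕ → X) : Prop :=
  CoarseSeq s ∧ CoarseSeq t ∧ ∃ κ : ℕ → ℕ, StrictMono κ ∧ s = t ∘ κ

/-- `s ≡σ t` : the equivalence relation generated by `⊑` on coarse sequences. -/
def SigmaEquiv {X : Type*} [PseudoMetricSpace X] (s t : ℕ → X) : Prop :=
  Relation.EqvGen SubCoarse s t

/-- `(X, ξ)` is non-scattering at infinity. -/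
def NonScattering {X : Type*} [PseudoMetricSpace X] (ξ : X) : Prop :=
  ∃ r : ℝ, ∀ A : Set X, ξ ∈ A → BoundedSet A →
    ∀ x ∈ Aᶜ, ∀ y ∈ Aᶜ, ∃ n : ℕ, ∃ c : ℕ → X, c 0 = x ∧ c n = y ∧
      (∀ i ≤ n, c i ∈ Aᶜ) ∧ (∀ i < n, dist (c i) (c (i + 1)) ≤ r)
lemma finClose_coe_iff {X : Type*} [PseudoMetricSpace X] (u v : ℕ → X) :
    FinClose (↑u : St X) (↑v : St X) ↔
      ∃ r : ℝ, ∀ᶠ n in (↑(Filter.hyperfilter ℕ) : Filter ℕ), dist (u n) (v n) ≤ r := by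
  unfold FinClose starDist
  rw [Filter.Germ.map₂_coe]
  exact exists_congr fun r => Filter.Germ.coe_le

lemma map_mem_INF {X Y : Type*} [PseudoMetricSpace X] [PseudoMetricSpace Y]
    (f : X → Y) (ξ : X) (η : Y) (hf : f ξ = η) (hpf : ProperAt f η)
    (u : ℕ → X) (hx : (↑u : St X) ∈ INF ξ) : (↑u : St X).map f ∈ INF η := by
  intro hcl
  apply hx
  rw [Filter.Germ.map_coe] at hcl
  have hη : (↑η : St Y) = ↑(fun _ : ℕ => η) := rfl
  rw [hη, finClose_coe_iff] at hcl
  obtain ⟨r, hr⟩ := hcl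
  set B : Set Y := {y | dist y η ≤ max r 0} with hB
  have hηB : η ∈ B := by simp [hB]
  have hBb : BoundedSet B := by
    refine ⟨2 * max r 0, fun a ha b hb => ?_⟩
    calc dist a b ≤ dist a η + dist b η := dist_triangle_right a b η
    _ ≤ max r 0 + max r 0 := add_le_add ha hb
    _ = 2 * max r 0 := by ring
  obtain ⟨s, hs⟩ := hpf B hηB hBb
  have hξ : ξ ∈ f ⁻¹' B := by simp [hB, hf]
  rw [show (↑ξ : St X) = ↑(fun _ : ℕ => ξ) from rfl, finClose_coe_iff]
  refine ⟨s, ?_⟩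
  filter_upwards [hr] with n hn
  exact hs (u n) (by simpa [hB] using hn.trans (le_max_left r 0)) ξ hξ

/-- Coarse homotopy invariance of `ι`: coarsely homotopic coarse maps induce the same
map on macrochain-connected components of the infinite points. -/
theorem iota_coarseHomotopy_invariant {X Y : Type*} [PseudoMetricSpace X] [PseudoMetricSpace Y]
    (f g : X → Y) (ξ : X) (η : Y) (hf : f ξ = η) (hg : g ξ = η)
    (hbf : Bornologous f) (hpf : ProperAt f η)
    (hbg : Bornologous g) (hpg : ProperAt g η)
    (hhom : ∃ r : ℝ, ∀ x : X, dist (f x) (g x) ≤ r) :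
    ∀ x ∈ INF ξ,
      x.map f ∈ INF η ∧ x.map g ∈ INF η ∧ IotaEquiv η (x.map f) (x.map g) := by
  intro x hx
  induction x using Quotient.inductionOn with | _ u => ?_
  have hfu : (Quotient.mk _ u : St X) = (↑u : St X) := rfl
  rw [hfu] at hx ⊢
  obtain ⟨r, hr⟩ := hhom
  have hfI : (↑u : St X).map f ∈ INF η := map_mem_INF f ξ η hf hpf u hx
  have hgI : (↑u : St X).map g ∈ INF η := map_mem_INF g ξ η hg hpg u hx
  refine ⟨hfI, hgI, ?_⟩
  refine ⟨fun _ => 1, fun n i => if i = 0 then f (u n) else g (u n), ?_, ?_, ?_, ?_⟩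
  · simp [Filter.Germ.map_coe]; rfl
  · simp [Filter.Germ.map_coe]; rfl
  · intro g' hg'
    rcases (Filter.hyperfilter ℕ).em {n | g' n = 0} with h0 | h1
    · have : (↑(fun n => if g' n = 0 then f (u n) else g (u n)) : St Y) = (↑u : St X).map f := by
        rw [Filter.Germ.map_coe]
        exact Filter.Germ.coe_eq.mpr (Filter.Eventually.mono h0 (fun n hn => by simp [show g' n = 0 from hn]))
      rw [this]; exact hfI
    · have h1' : ∀ᶠ n in (↑(Filter.hyperfilter ℕ) : Filter ℕ), g' n ≠ 0 := h1
      have : (↑(fun n => if g' n = 0 then f (u n) else g (u n)) : St Y) = (↑u : St X).map g := by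
        rw [Filter.Germ.map_coe]
        exact Filter.Germ.coe_eq.mpr (Filter.Eventually.mono h1' (fun n hn => by simp [hn]))
      rw [this]; exact hgI
  · intro g' hg'
    have h0 : ∀ᶠ n in (↑(Filter.hyperfilter ℕ) : Filter ℕ), g' n = 0 :=
      hg'.mono (fun n hn => Nat.lt_one_iff.mp hn)
    rw [finClose_coe_iff]
    refine ⟨r, ?_⟩
    filter_upwards [h0] with n hn
    simp [hn, hr (u n)]
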